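/- For all matrix indices i, j with 1 ≤ i, j ≤ m, if there exists k with 1 ≤ k ≤ m such that a_{ik} = 1 and b_{kj} = 1, then C_{i₁,j₁} ⇒* w_{i₂}^{j₂+2δ} in the grammar G. -/

import Mathlib

/- Formalization of (part of) the reduction of Boolean matrix multiplication
to context-free grammar parsing (Lee, "Fast context-free grammar parsing
requires fast Boolean matrix multiplication"). -/

namespace CFGBMM

/-- Nonterminals of the grammars of the reduction. -/
inductive NT : Type where
  | S : NT                 -- start symbol
  | T : NT                 -- extra symbol of the CNF grammar G'
  | W : NT                 -- derives arbitrary nonempty substrings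
  | Wl : ℕ → NT            -- `W_ℓ` of G'
  | X : ℕ → NT             -- `X_ℓ` of G'
  | A : ℕ → ℕ → NT         -- `A_{p,q}`
  | B : ℕ → ℕ → NT         -- `B_{p,q}`
  | C : ℕ → ℕ → NT         -- `C_{p,q}`
deriving DecidableEq

abbrev Sym : Type := Symbol ℕ NT

/-- `d = ⌈m^(1/3)⌉`. -/
noncomputable def dOf (m : ℕ) : ℕ := ⌈(m : ℝ) ^ ((1 : ℝ) / 3)⌉₊

/-- The substring `w_ℓ ⋯ w_r` of the input string `w = w₁ ⋯ w_{3d+6}`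
(in which `w_ℓ` is just the terminal `ℓ`), as a sentential form. -/
def seg (l r : ℕ) : List Sym := (List.range' l (r + 1 - l)).map Symbol.terminal

/-- W-rules of `G`:  `W → w_ℓ W | w_ℓ`  for `1 ≤ ℓ ≤ 3d+6`. -/
def WRules (d : ℕ) : Set (ContextFreeRule ℕ NT) :=
  {r | ∃ l, 1 ≤ l ∧ l ≤ 3 * d + 6 ∧
    (r = ⟨NT.W, [Symbol.terminal l, Symbol.nonterminal NT.W]⟩ ∨
     r = ⟨NT.W, [Symbol.terminal l]⟩)}

/-- A-rules of `G`:  `A_{i₁,j₁} → w_{i₂} W w_{j₂+δ}`  for each nonzero entry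
`a_{ij}` of `A` (here `i₁ = ⌊i/d⌋`, `i₂ = (i mod d) + 2`, `δ = d + 2`). -/
def ARules (m d : ℕ) (a : ℕ → ℕ → ℕ) : Set (ContextFreeRule ℕ NT) :=
  {r | ∃ i j, 1 ≤ i ∧ i ≤ m ∧ 1 ≤ j ∧ j ≤ m ∧ a i j = 1 ∧
    r = ⟨NT.A (i / d) (j / d),
      [Symbol.terminal (i % d + 2), Symbol.nonterminal NT.W,
       Symbol.terminal (j % d + 2 + (d + 2))]⟩}

/-- B-rules of `G`:  `B_{i₁,j₁} → w_{i₂+1+δ} W w_{j₂+2δ}`  for each nonzero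
entry `b_{ij}` of `B`. -/
def BRules (m d : ℕ) (b : ℕ → ℕ → ℕ) : Set (ContextFreeRule ℕ NT) :=
  {r | ∃ i j, 1 ≤ i ∧ i ≤ m ∧ 1 ≤ j ∧ j ≤ m ∧ b i j = 1 ∧
    r = ⟨NT.B (i / d) (j / d),
      [Symbol.terminal (i % d + 2 + 1 + (d + 2)), Symbol.nonterminal NT.W,
       Symbol.terminal (j % d + 2 + 2 * (d + 2))]⟩}

/-- C-rules:  `C_{p,q} → A_{p,r} B_{r,q}`  for all `0 ≤ p, q, r ≤ d²`. -/
def CRules (d : ℕ) : Set (ContextFreeRule ℕ NT) :=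
  {r | ∃ p q t, p ≤ d ^ 2 ∧ q ≤ d ^ 2 ∧ t ≤ d ^ 2 ∧
    r = ⟨NT.C p q, [Symbol.nonterminal (NT.A p t), Symbol.nonterminal (NT.B t q)]⟩}

/-- S-rules of `G`:  `S → W C_{p,q} W`  for all `0 ≤ p, q ≤ d²`. -/
def SRules (d : ℕ) : Set (ContextFreeRule ℕ NT) :=
  {r | ∃ p q, p ≤ d ^ 2 ∧ q ≤ d ^ 2 ∧
    r = ⟨NT.S, [Symbol.nonterminal NT.W, Symbol.nonterminal (NT.C p q),
      Symbol.nonterminal NT.W]⟩}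

/-- The production set of the grammar `G` of the reduction. -/
def RulesG (m d : ℕ) (a b : ℕ → ℕ → ℕ) : Set (ContextFreeRule ℕ NT) :=
  WRules d ∪ ARules m d a ∪ BRules m d b ∪ CRules d ∪ SRules d

/-- One rewriting step using some rule from the rule set `R`. -/
def Produces (R : Set (ContextFreeRule ℕ NT)) (u v : List Sym) : Prop :=
  ∃ r ∈ R, r.Rewrites u v

/-- The usual context-free derivation relation `⇒*` for the rule set `R`. -/
def Derives (R : Set (ContextFreeRule ℕ NT)) : List Sym → List Sym → Prop :=
  Relation.ReflTransGen (Produces R)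


lemma seg_single (l : ℕ) : seg l l = [Symbol.terminal l] := by
  simp [seg]

lemma seg_split {l x s : ℕ} (h1 : l ≤ x + 1) (h2 : x ≤ s) (h3 : l ≤ x) :
    seg l s = seg l x ++ seg (x + 1) s := by
  unfold seg
  rw [← List.map_append]
  congr 1
  have h := List.range'_append (s := l) (m := x + 1 - l) (n := s - x) (step := 1)
  simp only [one_mul] at h
  rw [show l + (x + 1 - l) = x + 1 by omega,
      show x + 1 - l + (s - x) = s + 1 - l by omega] at h
  rw [show s + 1 - (x + 1) = s - x by omega]
  exact h.symm

lemma derives_single {R : Set (ContextFreeRule ℕ NT)} {r : ContextFreeRule ℕ NT}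
    (hr : r ∈ R) : Derives R [Symbol.nonterminal r.input] r.output :=
  Relation.ReflTransGen.single ⟨r, hr, ContextFreeRule.Rewrites.input_output⟩

lemma derives_append_left {R : Set (ContextFreeRule ℕ NT)} {u v : List Sym}
    (h : Derives R u v) (p : List Sym) : Derives R (p ++ u) (p ++ v) := by
  induction h with
  | refl => exact Relation.ReflTransGen.refl
  | tail _ hs ih =>
      obtain ⟨r, hr, hrw⟩ := hs
      exact ih.tail ⟨r, hr, hrw.append_left p⟩

lemma derives_append_right {R : Set (ContextFreeRule ℕ NT)} {u v : List Sym}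
    (h : Derives R u v) (p : List Sym) : Derives R (u ++ p) (v ++ p) := by
  induction h with
  | refl => exact Relation.ReflTransGen.refl
  | tail _ hs ih =>
      obtain ⟨r, hr, hrw⟩ := hs
      exact ih.tail ⟨r, hr, hrw.append_right p⟩

lemma W_derives (m d : ℕ) (a b : ℕ → ℕ → ℕ) :
    ∀ (n l : ℕ), 1 ≤ l → l + n ≤ 3 * d + 6 →
      Derives (RulesG m d a b) [Symbol.nonterminal NT.W] (seg l (l + n)) := by
  intro n
  induction n with
  | zero =>
      intro l hl hl2
      have hmem : (⟨NT.W, [Symbol.terminal l]⟩ : ContextFreeRule ℕ NT) ∈ RulesG m d a b :=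
        Or.inl (Or.inl (Or.inl (Or.inl ⟨l, hl, by omega, Or.inr rfl⟩)))
      have h := derives_single hmem
      simpa [seg_single] using h
  | succ n ih =>
      intro l hl hl2
      have hmem : (⟨NT.W, [Symbol.terminal l, Symbol.nonterminal NT.W]⟩ :
          ContextFreeRule ℕ NT) ∈ RulesG m d a b :=
        Or.inl (Or.inl (Or.inl (Or.inl ⟨l, hl, by omega, Or.inl rfl⟩)))
      have h1 : Derives (RulesG m d a b) [Symbol.nonterminal NT.W]
          [Symbol.terminal l, Symbol.nonterminal NT.W] := derives_single hmem
      have h2 := derives_append_left (ih (l + 1) (by omega) (by omega)) [Symbol.terminal l]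
      have hseg : seg l (l + (n + 1)) =
          [Symbol.terminal l] ++ seg (l + 1) (l + 1 + n) := by
        rw [seg_split (x := l) (by omega) (by omega) (le_refl l), seg_single,
          show l + (n + 1) = l + 1 + n by omega]
      rw [hseg]
      exact h1.trans h2

lemma one_le_dOf (m : ℕ) (hm : 1 ≤ m) : 1 ≤ dOf m := by
  rw [dOf, Nat.one_le_ceil_iff]
  exact Real.rpow_pos_of_pos (by exact_mod_cast hm) _

lemma le_dOf_cube (m : ℕ) : m ≤ dOf m ^ 3 := by
  have h0 : (0 : ℝ) ≤ (m : ℝ) := Nat.cast_nonneg m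
  have h := Nat.le_ceil ((m : ℝ) ^ ((1 : ℝ) / 3))
  have h3 : ((m : ℝ) ^ ((1 : ℝ) / 3)) ^ (3 : ℕ) ≤ ((dOf m : ℕ) : ℝ) ^ (3 : ℕ) :=
    pow_le_pow_left₀ (Real.rpow_nonneg h0 _) h 3
  rw [← Real.rpow_natCast ((m : ℝ) ^ ((1 : ℝ) / 3)) 3, ← Real.rpow_mul h0] at h3
  norm_num at h3
  exact_mod_cast h3

/-- **Claim 1 of the paper.** For `1 ≤ i, j ≤ m`, if there exists `k` with
`1 ≤ k ≤ m`, `a_{ik} = 1` and `b_{kj} = 1`, then `C_{i₁,j₁} ⇒* w_{i₂}^{j₂+2δ}`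
in the grammar `G`. -/
theorem cnonterminal_derives_of_bmm_entry
    (m : ℕ) (hm : 1 ≤ m) (a b : ℕ → ℕ → ℕ)
    (ha : ∀ i j, a i j = 0 ∨ a i j = 1) (hb : ∀ i j, b i j = 0 ∨ b i j = 1)
    (d δ : ℕ) (hd : d = dOf m) (hδ : δ = d + 2)
    (i j : ℕ) (hi1 : 1 ≤ i) (him : i ≤ m) (hj1 : 1 ≤ j) (hjm : j ≤ m)
    (hk : ∃ k, 1 ≤ k ∧ k ≤ m ∧ a i k = 1 ∧ b k j = 1) :
    Derives (RulesG m d a b) [Symbol.nonterminal (NT.C (i / d) (j / d))]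
      (seg (i % d + 2) (j % d + 2 + 2 * δ)) := by
  obtain ⟨k, hk1, hkm, hak, hbk⟩ := hk
  subst hδ
  have hd1 : 1 ≤ d := hd ▸ one_le_dOf m hm
  have hcube : m ≤ d ^ 3 := hd ▸ le_dOf_cube m
  have hid : i % d < d := Nat.mod_lt i (by omega)
  have hkd : k % d < d := Nat.mod_lt k (by omega)
  have hjd : j % d < d := Nat.mod_lt j (by omega)
  have hdiv : ∀ x, x ≤ m → x / d ≤ d ^ 2 := by
    intro x hx
    have h1 : x / d ≤ d ^ 3 / d := Nat.div_le_div_right (le_trans hx hcube)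
    have h2 : d ^ 3 / d = d ^ 2 := by
      rw [pow_succ]
      exact Nat.mul_div_cancel _ (by omega)
    omega
  set R := RulesG m d a b with hR
  have hC : (⟨NT.C (i / d) (j / d),
      [Symbol.nonterminal (NT.A (i / d) (k / d)),
       Symbol.nonterminal (NT.B (k / d) (j / d))]⟩ : ContextFreeRule ℕ NT) ∈ R :=
    Or.inl (Or.inr ⟨i / d, j / d, k / d, hdiv i him, hdiv j hjm, hdiv k hkm, rfl⟩)
  have hA : (⟨NT.A (i / d) (k / d),
      [Symbol.terminal (i % d + 2), Symbol.nonterminal NT.W,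
       Symbol.terminal (k % d + 2 + (d + 2))]⟩ : ContextFreeRule ℕ NT) ∈ R :=
    Or.inl (Or.inl (Or.inl (Or.inr ⟨i, k, hi1, him, hk1, hkm, hak, rfl⟩)))
  have hB : (⟨NT.B (k / d) (j / d),
      [Symbol.terminal (k % d + 2 + 1 + (d + 2)), Symbol.nonterminal NT.W,
       Symbol.terminal (j % d + 2 + 2 * (d + 2))]⟩ : ContextFreeRule ℕ NT) ∈ R :=
    Or.inl (Or.inl (Or.inr ⟨k, j, hk1, hkm, hj1, hjm, hbk, rfl⟩))
  -- the two W-derivations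
  have W1 : Derives R [Symbol.nonterminal NT.W] (seg (i % d + 3) (k % d + d + 3)) := by
    have h := W_derives m d a b (k % d + d - i % d) (i % d + 3) (by omega) (by omega)
    rwa [show i % d + 3 + (k % d + d - i % d) = k % d + d + 3 by omega] at h
  have W2 : Derives R [Symbol.nonterminal NT.W]
      (seg (k % d + d + 6) (j % d + 2 * d + 5)) := by
    have h := W_derives m d a b (j % d + d - 1 - k % d) (k % d + d + 6) (by omega) (by omega)
    rwa [show k % d + d + 6 + (j % d + d - 1 - k % d) = j % d + 2 * d + 5 by omega] at h
  -- rewrite the target string as a concatenation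
  have key : seg (i % d + 2) (j % d + 2 + 2 * (d + 2)) =
      [Symbol.terminal (i % d + 2)] ++ seg (i % d + 3) (k % d + d + 3) ++
      [Symbol.terminal (k % d + 2 + (d + 2))] ++
      [Symbol.terminal (k % d + 2 + 1 + (d + 2))] ++
      seg (k % d + d + 6) (j % d + 2 * d + 5) ++
      [Symbol.terminal (j % d + 2 + 2 * (d + 2))] := by
    rw [seg_split (l := i % d + 2) (x := i % d + 2) (s := j % d + 2 + 2 * (d + 2))
      (by omega) (by omega) (le_refl _), seg_single,
      show i % d + 2 + 1 = i % d + 3 by omega,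
      seg_split (l := i % d + 3) (x := k % d + d + 3) (by omega) (by omega) (by omega),
      seg_split (l := k % d + d + 3 + 1) (x := k % d + d + 3 + 1)
        (by omega) (by omega) (le_refl _), seg_single,
      seg_split (l := k % d + d + 3 + 1 + 1) (x := k % d + d + 3 + 1 + 1)
        (by omega) (by omega) (le_refl _), seg_single,
      show k % d + d + 3 + 1 + 1 + 1 = k % d + d + 6 by omega,
      seg_split (l := k % d + d + 6) (x := j % d + 2 * d + 5) (by omega) (by omega)
        (by omega),
      show j % d + 2 * d + 5 + 1 = j % d + 2 + 2 * (d + 2) by ring, seg_single,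
      show k % d + d + 3 + 1 = k % d + 2 + (d + 2) by ring,
      show k % d + 2 + (d + 2) + 1 = k % d + 2 + 1 + (d + 2) by ring]
    simp [List.append_assoc]
  rw [key]
  -- build the derivation
  have s1 : Derives R [Symbol.nonterminal (NT.C (i / d) (j / d))]
      [Symbol.nonterminal (NT.A (i / d) (k / d)),
       Symbol.nonterminal (NT.B (k / d) (j / d))] := derives_single hC
  have s2 := derives_append_right (derives_single hA)
      [Symbol.nonterminal (NT.B (k / d) (j / d))]
  have s3 := derives_append_left (derives_single hB)
      [Symbol.terminal (i % d + 2), Symbol.nonterminal NT.W,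
       Symbol.terminal (k % d + 2 + (d + 2))]
  have s4 := derives_append_right (derives_append_left W1 [Symbol.terminal (i % d + 2)])
      [Symbol.terminal (k % d + 2 + (d + 2)),
       Symbol.terminal (k % d + 2 + 1 + (d + 2)), Symbol.nonterminal NT.W,
       Symbol.terminal (j % d + 2 + 2 * (d + 2))]
  have s5 := derives_append_right (derives_append_left W2
      ([Symbol.terminal (i % d + 2)] ++ seg (i % d + 3) (k % d + d + 3) ++
       [Symbol.terminal (k % d + 2 + (d + 2)),
        Symbol.terminal (k % d + 2 + 1 + (d + 2))]))
      [Symbol.terminal (j % d + 2 + 2 * (d + 2))]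
  have t2 : Derives R
      [Symbol.nonterminal (NT.A (i / d) (k / d)), Symbol.nonterminal (NT.B (k / d) (j / d))]
      [Symbol.terminal (i % d + 2), Symbol.nonterminal NT.W,
       Symbol.terminal (k % d + 2 + (d + 2)), Symbol.nonterminal (NT.B (k / d) (j / d))] := by
    simpa using s2
  have t3 : Derives R
      [Symbol.terminal (i % d + 2), Symbol.nonterminal NT.W,
       Symbol.terminal (k % d + 2 + (d + 2)), Symbol.nonterminal (NT.B (k / d) (j / d))]
      [Symbol.terminal (i % d + 2), Symbol.nonterminal NT.W,
       Symbol.terminal (k % d + 2 + (d + 2)), Symbol.terminal (k % d + 2 + 1 + (d + 2)),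
       Symbol.nonterminal NT.W, Symbol.terminal (j % d + 2 + 2 * (d + 2))] := by
    simpa using s3
  have t4 : Derives R
      [Symbol.terminal (i % d + 2), Symbol.nonterminal NT.W,
       Symbol.terminal (k % d + 2 + (d + 2)), Symbol.terminal (k % d + 2 + 1 + (d + 2)),
       Symbol.nonterminal NT.W, Symbol.terminal (j % d + 2 + 2 * (d + 2))]
      (Symbol.terminal (i % d + 2) :: (seg (i % d + 3) (k % d + d + 3) ++
        [Symbol.terminal (k % d + 2 + (d + 2)), Symbol.terminal (k % d + 2 + 1 + (d + 2)),
         Symbol.nonterminal NT.W, Symbol.terminal (j % d + 2 + 2 * (d + 2))])) := by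
    simpa using s4
  have t5 : Derives R
      (Symbol.terminal (i % d + 2) :: (seg (i % d + 3) (k % d + d + 3) ++
        [Symbol.terminal (k % d + 2 + (d + 2)), Symbol.terminal (k % d + 2 + 1 + (d + 2)),
         Symbol.nonterminal NT.W, Symbol.terminal (j % d + 2 + 2 * (d + 2))]))
      (Symbol.terminal (i % d + 2) :: (seg (i % d + 3) (k % d + d + 3) ++
        (Symbol.terminal (k % d + 2 + (d + 2)) :: Symbol.terminal (k % d + 2 + 1 + (d + 2)) ::
          (seg (k % d + d + 6) (j % d + 2 * d + 5) ++
           [Symbol.terminal (j % d + 2 + 2 * (d + 2))])))) := by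
    simpa using s5
  simp only [List.append_assoc, List.cons_append, List.singleton_append, List.nil_append]
  exact s1.trans (t2.trans (t3.trans (t4.trans t5)))

end CFGBMM
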